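/- arXiv:2307.06759 — 2 statements merged into one kernel-verified Lean document; each statement's English description precedes it below -/
import Mathlib

section
/- Let p, p′ ≥ 1 with 1/p + 1/p′ > 1 and let μ be any number with 1 < μ < 1/p + 1/p′. Let h : [0,T] → ℝ have finite p′-variation and x : [0,T] → ℝ have finite p-variation. Then for all grid points u ≤ v, |∑_{u ≤ t_k < v} (h(t_k) − h(u)) · (x(t_{k+1}) − x(t_k))| ≤ K_μ · ‖h‖_{p′-var,[u,v]} · ‖x‖_{p-var,[u,v]}, where K_μ = 2^μ ∑_{l=1}^∞ l^{−μ}. -/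
/-!
Deleting an interior point `σᵢ` of a partition changes the Young sum
`∑ⱼ (h σⱼ - h σ₀) (x σⱼ₊₁ - x σⱼ)` by exactly `(h σᵢ - h σᵢ₋₁) (x σᵢ₊₁ - x σᵢ)`.
By Hölder's inequality with `1/r = 1/p' + 1/p`, among `k` interior points there is one where this
product is at most `k^(-1/r) ‖h‖_{p'-var} ‖x‖_{p-var}`, the variations being taken over the whole
interval, which deletions do not change. Deleting such points one by one bounds the sum by
`∑ₖ k^(-1/r) ≤ ∑ₖ k^(-μ)` times the two variations, which is already below `K_μ`.
-/

/-- The set of partition sums `(∑ |f(σ(i+1)) − f(σ i)|^q)^{1/q}` over all finite partitions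
`s = σ 0 ≤ σ 1 ≤ ⋯ ≤ σ m = t` of `[s, t]`. -/
def qVarSums (q : ℝ) (f : ℝ → ℝ) (s t : ℝ) : Set ℝ :=
  {v : ℝ | ∃ (m : ℕ) (σ : ℕ → ℝ), σ 0 = s ∧ σ m = t ∧
    (∀ i, i < m → σ i ≤ σ (i + 1)) ∧
    v = (∑ i ∈ Finset.range m, |f (σ (i + 1)) - f (σ i)| ^ q) ^ (1 / q)}

/-- The `q`-variation seminorm `‖f‖_{q-var,[s,t]}`. -/
noncomputable def qVar (q : ℝ) (f : ℝ → ℝ) (s t : ℝ) : ℝ :=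
  sSup (qVarSums q f s t)

open Finset Real

section qVar

variable {q : ℝ} {f : ℝ → ℝ}

theorem partitionSum_mem_qVarSums {m : ℕ} {σ : ℕ → ℝ} (hσ : ∀ i < m, σ i ≤ σ (i + 1)) :
    (∑ i ∈ range m, |f (σ (i + 1)) - f (σ i)| ^ q) ^ (1 / q) ∈ qVarSums q f (σ 0) (σ m) :=
  ⟨m, σ, rfl, rfl, hσ, rfl⟩

theorem qVar_nonneg {m : ℕ} {σ : ℕ → ℝ} (hσ : ∀ i < m, σ i ≤ σ (i + 1))
    (hbdd : BddAbove (qVarSums q f (σ 0) (σ m))) : 0 ≤ qVar q f (σ 0) (σ m) :=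
  (rpow_nonneg (sum_nonneg fun _ _ => rpow_nonneg (abs_nonneg _) q) _).trans
    (le_csSup hbdd (partitionSum_mem_qVarSums hσ))

theorem sum_rpow_le_qVar_rpow (hq : 0 < q) {m : ℕ} {σ : ℕ → ℝ}
    (hσ : ∀ i < m, σ i ≤ σ (i + 1)) (hbdd : BddAbove (qVarSums q f (σ 0) (σ m))) :
    ∑ i ∈ range m, |f (σ (i + 1)) - f (σ i)| ^ q ≤ qVar q f (σ 0) (σ m) ^ q := by
  set S := ∑ i ∈ range m, |f (σ (i + 1)) - f (σ i)| ^ q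
  have hS : 0 ≤ S := sum_nonneg fun _ _ => rpow_nonneg (abs_nonneg _) q
  calc S = (S ^ (1 / q)) ^ q := by
        rw [← rpow_mul hS, one_div_mul_cancel hq.ne', rpow_one]
    _ ≤ qVar q f (σ 0) (σ m) ^ q :=
      rpow_le_rpow (rpow_nonneg hS _) (le_csSup hbdd (partitionSum_mem_qVarSums hσ)) hq.le

theorem BddAbove.qVarSums_of_le_left (hq : 0 ≤ q) {s s' t : ℝ} (hs : s ≤ s')
    (hbdd : BddAbove (qVarSums q f s t)) : BddAbove (qVarSums q f s' t) := by
  obtain ⟨M, hM⟩ := hbdd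
  refine ⟨M, ?_⟩
  rintro _ ⟨m, σ, rfl, rfl, hσ, rfl⟩
  let τ : ℕ → ℝ := fun j => if j = 0 then s else σ (j - 1)
  have hτ : ∀ i < m + 1, τ i ≤ τ (i + 1) := by
    rintro (_ | i) hi
    · simpa [τ] using hs
    · simpa [τ] using hσ i (by omega)
  refine le_trans ?_ (hM ⟨m + 1, τ, by simp [τ], by simp [τ], hτ, rfl⟩)
  refine rpow_le_rpow (sum_nonneg fun _ _ => rpow_nonneg (abs_nonneg _) q) ?_
    (one_div_nonneg.mpr hq)
  rw [sum_range_succ']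
  simpa [τ] using rpow_nonneg (abs_nonneg (f (σ 0) - f s)) q

theorem BddAbove.qVarSums_of_le_right (hq : 0 ≤ q) {s t t' : ℝ} (ht : t' ≤ t)
    (hbdd : BddAbove (qVarSums q f s t)) : BddAbove (qVarSums q f s t') := by
  obtain ⟨M, hM⟩ := hbdd
  refine ⟨M, ?_⟩
  rintro _ ⟨m, σ, rfl, rfl, hσ, rfl⟩
  let τ : ℕ → ℝ := fun j => if j ≤ m then σ j else t
  have hτ : ∀ i < m + 1, τ i ≤ τ (i + 1) := by
    intro i hi
    rcases Nat.lt_or_ge i m with him | hmi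
    · simpa [τ, him.le, Nat.succ_le_of_lt him] using hσ i him
    · simpa [τ, show i = m by omega] using ht
  refine le_trans ?_ (hM ⟨m + 1, τ, by simp [τ], by simp [τ], hτ, rfl⟩)
  refine rpow_le_rpow (sum_nonneg fun _ _ => rpow_nonneg (abs_nonneg _) q) ?_
    (one_div_nonneg.mpr hq)
  rw [sum_range_succ]
  have hterms : ∀ i ∈ range m,
      |f (τ (i + 1)) - f (τ i)| ^ q = |f (σ (i + 1)) - f (σ i)| ^ q := fun i hi => by
    have him := mem_range.mp hi
    simp [τ, him.le, Nat.succ_le_of_lt him]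
  rw [sum_congr rfl hterms]
  exact le_add_of_nonneg_right (rpow_nonneg (abs_nonneg _) q)

end qVar

theorem Finset.exists_mul_le_card_rpow_mul {ι : Type*} {s : Finset ι} (hs : s.Nonempty)
    {p q r : ℝ} (hpqr : p.HolderTriple q r) {a b : ι → ℝ} (ha : ∀ i ∈ s, 0 ≤ a i)
    (hb : ∀ i ∈ s, 0 ≤ b i) {A B : ℝ} (hA : 0 ≤ A) (hB : 0 ≤ B)
    (hsa : ∑ i ∈ s, a i ^ p ≤ A ^ p) (hsb : ∑ i ∈ s, b i ^ q ≤ B ^ q) :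
    ∃ i ∈ s, a i * b i ≤ (#s : ℝ) ^ (-r⁻¹) * (A * B) := by
  obtain ⟨hp, hq, hr⟩ := hpqr.all_pos
  have hcard : (0 : ℝ) < #s := by exact_mod_cast hs.card_pos
  have holder : ∑ i ∈ s, (a i * b i) ^ r ≤ (A * B) ^ r := calc
    _ ≤ (∑ i ∈ s, a i ^ p) ^ (r / p) * (∑ i ∈ s, b i ^ q) ^ (r / q) :=
      Lr_rpow_le_Lp_mul_Lq_of_nonneg s hpqr ha hb
    _ ≤ (A ^ p) ^ (r / p) * (B ^ q) ^ (r / q) := by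
      have := hpqr.nonneg'
      have := sum_nonneg fun i hi => rpow_nonneg (ha i hi) p
      have := sum_nonneg fun i hi => rpow_nonneg (hb i hi) q
      gcongr
    _ = (A * B) ^ r := by
      rw [← rpow_mul hA, ← rpow_mul hB, mul_div_cancel₀ _ hp.ne', mul_div_cancel₀ _ hq.ne',
        mul_rpow hA hB]
  obtain ⟨i, hi, hle⟩ := exists_le_of_sum_le hs (f := fun i => (a i * b i) ^ r)
    (g := fun _ => (A * B) ^ r / #s)
    (by simpa [sum_const, mul_div_cancel₀ _ hcard.ne'] using holder)
  refine ⟨i, hi, (rpow_le_rpow_iff (mul_nonneg (ha i hi) (hb i hi)) (by positivity) hr).mp ?_⟩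
  calc (a i * b i) ^ r ≤ (A * B) ^ r / #s := hle
    _ = ((#s : ℝ) ^ (-r⁻¹) * (A * B)) ^ r := by
      rw [mul_rpow (by positivity) (mul_nonneg hA hB), ← rpow_mul hcard.le, neg_mul,
        inv_mul_cancel₀ hr.ne', rpow_neg_one, div_eq_inv_mul]

def eraseIdx {α : Type*} (σ : ℕ → α) (i : ℕ) : ℕ → α :=
  fun j => if j < i then σ j else σ (j + 1)

theorem eraseIdx_of_lt {α : Type*} {σ : ℕ → α} {i j : ℕ} (h : j < i) : eraseIdx σ i j = σ j :=
  if_pos h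

theorem eraseIdx_of_le {α : Type*} {σ : ℕ → α} {i j : ℕ} (h : i ≤ j) :
    eraseIdx σ i j = σ (j + 1) :=
  if_neg (not_lt.mpr h)

theorem eraseIdx_le_succ {σ : ℕ → ℝ} {m i : ℕ} (hσ : ∀ j < m + 1, σ j ≤ σ (j + 1)) :
    ∀ j < m, eraseIdx σ i j ≤ eraseIdx σ i (j + 1) := by
  intro j hj
  rcases lt_trichotomy (j + 1) i with hji | hji | hji
  · rw [eraseIdx_of_lt hji, eraseIdx_of_lt (by omega)]
    exact hσ j (by omega)
  · rw [eraseIdx_of_lt (by omega), eraseIdx_of_le hji.ge]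
    exact (hσ j (by omega)).trans (hσ (j + 1) (by omega))
  · rw [eraseIdx_of_le (by omega), eraseIdx_of_le (by omega)]
    exact hσ (j + 1) (by omega)

def youngSum (h x : ℝ → ℝ) (σ : ℕ → ℝ) (m : ℕ) : ℝ :=
  ∑ j ∈ range m, (h (σ j) - h (σ 0)) * (x (σ (j + 1)) - x (σ j))

theorem youngSum_succ (h x : ℝ → ℝ) (σ : ℕ → ℝ) (m : ℕ) :
    youngSum h x σ (m + 1) =
      youngSum h x σ m + (h (σ m) - h (σ 0)) * (x (σ (m + 1)) - x (σ m)) :=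
  sum_range_succ _ _

theorem youngSum_eraseIdx (h x : ℝ → ℝ) (σ : ℕ → ℝ) {i m : ℕ} (him : i < m) :
    youngSum h x σ (m + 1) = youngSum h x (eraseIdx σ (i + 1)) m
      + (h (σ (i + 1)) - h (σ i)) * (x (σ (i + 2)) - x (σ (i + 1))) := by
  induction m, him using Nat.le_induction with
  | base =>
    have hprefix : youngSum h x (eraseIdx σ (i + 1)) i = youngSum h x σ i :=
      sum_congr rfl fun j hj => by
        have hj : j < i := mem_range.mp hj
        rw [eraseIdx_of_lt (show j < i + 1 by omega),
          eraseIdx_of_lt (show j + 1 < i + 1 by omega), eraseIdx_of_lt (show 0 < i + 1 by omega)]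
    rw [youngSum_succ, youngSum_succ, youngSum_succ, hprefix,
      eraseIdx_of_lt (show i < i + 1 by omega), eraseIdx_of_lt (show 0 < i + 1 by omega),
      eraseIdx_of_le (le_refl (i + 1))]
    ring
  | succ m him ih =>
    rw [youngSum_succ, ih, youngSum_succ _ _ (eraseIdx _ _), eraseIdx_of_le him,
      eraseIdx_of_le (show i + 1 ≤ m + 1 by omega), eraseIdx_of_lt (show 0 < i + 1 by omega)]
    ring

theorem abs_youngSum_succ_le {p q r : ℝ} (hpqr : p.HolderTriple q r) (h x : ℝ → ℝ) (m : ℕ)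
    (σ : ℕ → ℝ) (hσ : ∀ i < m + 1, σ i ≤ σ (i + 1))
    (hh : BddAbove (qVarSums p h (σ 0) (σ (m + 1))))
    (hx : BddAbove (qVarSums q x (σ 0) (σ (m + 1)))) :
    |youngSum h x σ (m + 1)| ≤ (∑ l ∈ range m, ((l : ℝ) + 1) ^ (-r⁻¹)) *
      (qVar p h (σ 0) (σ (m + 1)) * qVar q x (σ 0) (σ (m + 1))) := by
  induction m generalizing σ with
  | zero => simp [youngSum]
  | succ m ih =>
    set V := qVar p h (σ 0) (σ (m + 2))
    set W := qVar q x (σ 0) (σ (m + 2))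
    have hsa : ∑ i ∈ range (m + 1), |h (σ (i + 1)) - h (σ i)| ^ p ≤ V ^ p :=
      (sum_le_sum_of_subset_of_nonneg (range_subset_range.mpr (by omega))
        fun _ _ _ => rpow_nonneg (abs_nonneg _) p).trans (sum_rpow_le_qVar_rpow hpqr.pos hσ hh)
    have hsb : ∑ i ∈ range (m + 1), |x (σ (i + 2)) - x (σ (i + 1))| ^ q ≤ W ^ q := by
      refine le_trans ?_ (sum_rpow_le_qVar_rpow hpqr.symm.pos hσ hx)
      rw [sum_range_succ' _ (m + 1)]
      exact le_add_of_nonneg_right (rpow_nonneg (abs_nonneg _) q)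
    obtain ⟨i, hi, hD⟩ := exists_mul_le_card_rpow_mul nonempty_range_add_one hpqr
      (fun _ _ => abs_nonneg _) (fun _ _ => abs_nonneg _) (qVar_nonneg hσ hh) (qVar_nonneg hσ hx)
      hsa hsb
    rw [mem_range] at hi
    have hstart : eraseIdx σ (i + 1) 0 = σ 0 := eraseIdx_of_lt (by omega)
    have hend : eraseIdx σ (i + 1) (m + 1) = σ (m + 2) := eraseIdx_of_le (by omega)
    have ih' := ih (eraseIdx σ (i + 1)) (eraseIdx_le_succ hσ) (by rwa [hstart, hend])
      (by rwa [hstart, hend])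
    rw [hstart, hend] at ih'
    rw [card_range, Nat.cast_add_one] at hD
    calc |youngSum h x σ (m + 2)|
        ≤ |youngSum h x (eraseIdx σ (i + 1)) (m + 1)|
          + |h (σ (i + 1)) - h (σ i)| * |x (σ (i + 2)) - x (σ (i + 1))| := by
          rw [youngSum_eraseIdx h x σ hi, ← abs_mul]
          exact abs_add_le _ _
      _ ≤ (∑ l ∈ range m, ((l : ℝ) + 1) ^ (-r⁻¹)) * (V * W)
          + ((m : ℝ) + 1) ^ (-r⁻¹) * (V * W) := add_le_add ih' hD
      _ = (∑ l ∈ range (m + 1), ((l : ℝ) + 1) ^ (-r⁻¹)) * (V * W) := by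
          rw [sum_range_succ, add_mul]

theorem abs_youngSum_le {p q r : ℝ} (hpqr : p.HolderTriple q r) (h x : ℝ → ℝ) (m : ℕ)
    (σ : ℕ → ℝ) (hσ : ∀ i < m, σ i ≤ σ (i + 1))
    (hh : BddAbove (qVarSums p h (σ 0) (σ m))) (hx : BddAbove (qVarSums q x (σ 0) (σ m))) :
    |youngSum h x σ m| ≤ (∑ l ∈ range (m - 1), ((l : ℝ) + 1) ^ (-r⁻¹)) *
      (qVar p h (σ 0) (σ m) * qVar q x (σ 0) (σ m)) := by
  cases m with
  | zero => simp [youngSum]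
  | succ m => exact abs_youngSum_succ_le hpqr h x m σ hσ hh hx

theorem sum_range_rpow_neg_le_tsum {μ θ : ℝ} (hμ : 1 < μ) (hμθ : μ ≤ θ) (N : ℕ) :
    ∑ l ∈ range N, ((l : ℝ) + 1) ^ (-θ) ≤ ∑' l : ℕ, ((l : ℝ) + 1) ^ (-μ) := by
  have hsum : Summable fun l : ℕ => ((l : ℝ) + 1) ^ (-μ) := by
    simpa using (summable_nat_add_iff 1).mpr (summable_nat_rpow.mpr (by linarith : -μ < -1))
  calc ∑ l ∈ range N, ((l : ℝ) + 1) ^ (-θ) ≤ ∑ l ∈ range N, ((l : ℝ) + 1) ^ (-μ) :=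
        sum_le_sum fun l _ =>
          rpow_le_rpow_of_exponent_le (by linarith [l.cast_nonneg (α := ℝ)]) (neg_le_neg hμθ)
    _ ≤ ∑' l : ℕ, ((l : ℝ) + 1) ^ (-μ) := hsum.sum_le_tsum _ fun l _ => by positivity

theorem abs_youngSum_le_tsum {p q μ : ℝ} (hp : 0 < p) (hq : 0 < q) (hμ : 1 < μ)
    (hμpq : μ ≤ 1 / p + 1 / q) (h x : ℝ → ℝ) (m : ℕ) (σ : ℕ → ℝ)
    (hσ : ∀ i < m, σ i ≤ σ (i + 1))
    (hh : BddAbove (qVarSums p h (σ 0) (σ m))) (hx : BddAbove (qVarSums q x (σ 0) (σ m))) :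
    |youngSum h x σ m| ≤ (∑' l : ℕ, ((l : ℝ) + 1) ^ (-μ)) *
      (qVar p h (σ 0) (σ m) * qVar q x (σ 0) (σ m)) := by
  have hyoung := abs_youngSum_le (Real.HolderTriple.of_pos hp hq) h x m σ hσ hh hx
  rw [inv_inv] at hyoung
  refine hyoung.trans (mul_le_mul_of_nonneg_right ?_ (mul_nonneg (qVar_nonneg hσ hh)
    (qVar_nonneg hσ hx)))
  exact sum_range_rpow_neg_le_tsum hμ (by simpa only [one_div] using hμpq) _

theorem discrete_young_estimate_general
    (T : ℝ) (hT : 0 < T) (n : ℕ)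
    (t : ℕ → ℝ) (ht : ∀ k, t k = (k : ℝ) * (T / n))
    (p p' : ℝ) (hp : 1 ≤ p) (hp' : 1 ≤ p')
    (μ : ℝ) (hμ : 1 < μ) (hμ' : μ < 1 / p + 1 / p')
    (h x : ℝ → ℝ)
    (hh : BddAbove (qVarSums p' h 0 T))
    (hx : BddAbove (qVarSums p x 0 T)) :
    ∀ a b : ℕ, a ≤ b → b ≤ n →
      |∑ k ∈ Finset.Ico a b, (h (t k) - h (t a)) * (x (t (k + 1)) - x (t k))|
        ≤ ((2 : ℝ) ^ μ * ∑' l : ℕ, ((l : ℝ) + 1) ^ (-μ)) *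
            qVar p' h (t a) (t b) * qVar p x (t a) (t b) := by
  intro a b hab hbn
  set σ : ℕ → ℝ := fun k => t (a + k)
  have hσ : ∀ i < b - a, σ i ≤ σ (i + 1) := fun i _ => by
    simp only [σ, ht]
    gcongr
    exact_mod_cast i.le_succ
  have hσm : σ (b - a) = t b := by simp only [σ, Nat.add_sub_cancel' hab]
  have hbT : t b ≤ T := calc
    t b = (b / n : ℝ) * T := by rw [ht]; ring
    _ ≤ 1 * T := by gcongr; exact div_le_one_of_le₀ (by exact_mod_cast hbn) n.cast_nonneg
    _ = T := one_mul T
  have hrestrict {q : ℝ} {f : ℝ → ℝ} (hq : 1 ≤ q) (hf : BddAbove (qVarSums q f 0 T)) :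
      BddAbove (qVarSums q f (σ 0) (σ (b - a))) := by
    rw [hσm]
    exact (hf.qVarSums_of_le_left (by linarith) (by simp only [σ, ht]; positivity))
      |>.qVarSums_of_le_right (by linarith) hbT
  have hyoung := abs_youngSum_le_tsum (by linarith) (by linarith) hμ (by linarith) h x (b - a) σ
    hσ (hrestrict hp' hh) (hrestrict hp hx)
  rw [hσm] at hyoung
  calc |∑ k ∈ Finset.Ico a b, (h (t k) - h (t a)) * (x (t (k + 1)) - x (t k))|
      = |youngSum h x σ (b - a)| := by rw [sum_Ico_eq_sum_range]; rfl
    _ ≤ (∑' l : ℕ, ((l : ℝ) + 1) ^ (-μ)) * (qVar p' h (t a) (t b) * qVar p x (t a) (t b)) :=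
      hyoung
    _ ≤ 2 ^ μ * ((∑' l : ℕ, ((l : ℝ) + 1) ^ (-μ)) *
          (qVar p' h (t a) (t b) * qVar p x (t a) (t b))) :=
      le_mul_of_one_le_left ((abs_nonneg _).trans hyoung) (one_le_rpow one_le_two (by linarith))
    _ = _ := by ring

/-- **Discrete Young-type estimate.** For `1/p + 1/p' > 1` and `1 < μ < 1/p + 1/p'`, if `h`
has finite `p'`-variation and `x` has finite `p`-variation on `[0, T]`, then for all grid
points `u ≤ v` of the uniform partition `t k = k * (T / n)`,
`|∑_{u ≤ t_k < v} (h(t_k) − h(u)) (x(t_{k+1}) − x(t_k))|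
  ≤ K_μ ‖h‖_{p'-var,[u,v]} ‖x‖_{p-var,[u,v]}` with `K_μ = 2^μ ∑_{l ≥ 1} l^{−μ}`. -/
theorem discrete_young_estimate
    (T : ℝ) (hT : 0 < T) (n : ℕ) (hn : 1 ≤ n)
    (t : ℕ → ℝ) (ht : ∀ k, t k = (k : ℝ) * (T / n))
    (p p' : ℝ) (hp : 1 ≤ p) (hp' : 1 ≤ p') (hpp' : 1 < 1 / p + 1 / p')
    (μ : ℝ) (hμ : 1 < μ) (hμ' : μ < 1 / p + 1 / p')
    (h x : ℝ → ℝ)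
    (hh : BddAbove (qVarSums p' h 0 T))
    (hx : BddAbove (qVarSums p x 0 T)) :
    ∀ a b : ℕ, a ≤ b → b ≤ n →
      |∑ k ∈ Finset.Ico a b, (h (t k) - h (t a)) * (x (t (k + 1)) - x (t k))|
        ≤ ((2 : ℝ) ^ μ * ∑' l : ℕ, ((l : ℝ) + 1) ^ (-μ)) *
            qVar p' h (t a) (t b) * qVar p x (t a) (t b) :=
  discrete_young_estimate_general T hT n t ht p p' hp hp' μ hμ hμ' h x hh hx
end

section
/- Let H ∈ (0,1/2], T > 0, and let φ : [0,T]² → ℝ be bounded and measurable. Then for all 0 ≤ u < v ≤ T and 0 ≤ s < t ≤ T, |∫_0^T ∫_0^T φ(η,ζ) ρ_{uv}(η) ρ_{st}(ζ) dη dζ| ≤ 4 (v − u)^{2H} (t − s)^{2H} · sup_{(η,ζ) ∈ [0,T]²} |φ(η,ζ)|. -/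
/-!
Off `{a, b}` the kernel `ρ_{ab}` (`fbmKernel H a b`) is the derivative of
`P(η) = (|a - η|^{2H} - |b - η|^{2H}) / 2`. For `H ≤ 1/2` it is `≤ 0` left of `a`, `≥ 0` on
`(a, b)` and `≤ 0` right of `b`, so the fundamental theorem of calculus on these three pieces gives
`∫_x^y |ρ_{ab}| = P(x) - 2P(a) + 2P(b) - P(y) ≤ -2P(a) + 2P(b) = 2(b - a)^{2H}`,
the discarded terms `P(x) ≤ 0 ≤ P(y)` having a sign by monotonicity of `r ↦ r^{2H}`.
The double pairing is bounded by `sup |φ|` times the product of these two `L¹` norms.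
-/

open MeasureTheory Set intervalIntegral
open scoped Interval

theorem hasDerivAt_abs_sub_rpow (c q : ℝ) {η : ℝ} (hη : η ≠ c) :
    HasDerivAt (fun x => |c - x| ^ q) (-(q * (Real.sign (c - η) * |c - η| ^ (q - 1)))) η := by
  have hc : c - η ≠ 0 := sub_ne_zero.2 hη.symm
  have hsub := (hasDerivAt_id η).const_sub c
  have habs : HasDerivAt (fun x => |c - x|) (-Real.sign (c - η)) η := by
    rcases hc.lt_or_gt with hneg | hpos
    · refine ((hasDerivAt_abs_neg hneg).comp η hsub).congr_deriv ?_
      rw [Real.sign_of_neg hneg]; ring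
    · refine ((hasDerivAt_abs_pos hpos).comp η hsub).congr_deriv ?_
      rw [Real.sign_of_pos hpos]; ring
  convert habs.rpow_const (p := q) (Or.inl (abs_ne_zero.2 hc)) using 1
  ring

theorem integral_abs_eq_sub_of_hasDerivAt_of_nonneg {f g : ℝ → ℝ} {x y : ℝ} (hxy : x ≤ y)
    (hg : ContinuousOn g (Icc x y)) (hderiv : ∀ η ∈ Ioo x y, HasDerivAt g (f η) η)
    (hf : ∀ η ∈ Ioo x y, 0 ≤ f η) :
    IntervalIntegrable f volume x y ∧ ∫ η in x..y, |f η| = g y - g x := by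
  have hint : IntervalIntegrable f volume x y :=
    (intervalIntegrable_iff_integrableOn_Ioc_of_le hxy).2
      (integrableOn_deriv_of_nonneg hg hderiv hf)
  refine ⟨hint, ?_⟩
  rw [← integral_eq_sub_of_hasDerivAt_of_le hxy hg hderiv hint]
  refine integral_congr_uIoo fun η hη => abs_of_nonneg (hf η ?_)
  rwa [uIoo_of_le hxy] at hη

theorem integral_abs_eq_sub_of_hasDerivAt_of_nonpos {f g : ℝ → ℝ} {x y : ℝ} (hxy : x ≤ y)
    (hg : ContinuousOn g (Icc x y)) (hderiv : ∀ η ∈ Ioo x y, HasDerivAt g (f η) η)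
    (hf : ∀ η ∈ Ioo x y, f η ≤ 0) :
    IntervalIntegrable f volume x y ∧ ∫ η in x..y, |f η| = g x - g y := by
  obtain ⟨hint, heq⟩ := integral_abs_eq_sub_of_hasDerivAt_of_nonneg (f := -f) (g := -g) hxy
    hg.neg (fun η hη => (hderiv η hη).neg) (fun η hη => neg_nonneg.2 (hf η hη))
  refine ⟨by simpa using hint.neg, ?_⟩
  simpa [abs_neg, sub_eq_neg_add, add_comm] using heq

theorem abs_integral_integral_mul_le {φ : ℝ → ℝ → ℝ} {f g : ℝ → ℝ} {x y S : ℝ} (hxy : x ≤ y)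
    (hφ : ∀ η ∈ Icc x y, ∀ ζ ∈ Icc x y, |φ η ζ| ≤ S)
    (hf : IntervalIntegrable f volume x y) (hg : IntervalIntegrable g volume x y) :
    |∫ ζ in x..y, ∫ η in x..y, φ η ζ * f η * g ζ|
      ≤ S * (∫ η in x..y, |f η|) * ∫ ζ in x..y, |g ζ| := by
  have hinner : ∀ ζ ∈ Icc x y,
      ‖∫ η in x..y, φ η ζ * f η * g ζ‖ ≤ S * (∫ η in x..y, |f η|) * |g ζ| := by
    intro ζ hζ
    calc ‖∫ η in x..y, φ η ζ * f η * g ζ‖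
        ≤ ∫ η in x..y, S * |f η| * |g ζ| := by
          refine norm_integral_le_of_norm_le hxy (ae_of_all _ fun η hη => ?_)
            ((hf.abs.const_mul S).mul_const |g ζ|)
          rw [Real.norm_eq_abs, abs_mul, abs_mul]
          gcongr
          exact hφ η (Ioc_subset_Icc_self hη) ζ hζ
      _ = S * (∫ η in x..y, |f η|) * |g ζ| := by
          rw [intervalIntegral.integral_mul_const, intervalIntegral.integral_const_mul]
  rw [← Real.norm_eq_abs, ← intervalIntegral.integral_const_mul]
  exact norm_integral_le_of_norm_le hxy
    (ae_of_all _ fun ζ hζ => hinner ζ (Ioc_subset_Icc_self hζ)) (hg.abs.const_mul _)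

noncomputable def fbmKernel (H a b η : ℝ) : ℝ :=
  H * (Real.sign (b - η) * |b - η| ^ (2 * H - 1) - Real.sign (a - η) * |a - η| ^ (2 * H - 1))

-- Up to an additive constant, `η ↦ R(η, b) - R(η, a)`.
noncomputable def fbmKernelPrimitive (H a b η : ℝ) : ℝ :=
  (|a - η| ^ (2 * H) - |b - η| ^ (2 * H)) / 2

section fbmKernel

variable {H a b η : ℝ}

theorem hasDerivAt_fbmKernelPrimitive (ha : η ≠ a) (hb : η ≠ b) :
    HasDerivAt (fbmKernelPrimitive H a b) (fbmKernel H a b η) η := by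
  refine (((hasDerivAt_abs_sub_rpow a (2 * H) ha).sub
    (hasDerivAt_abs_sub_rpow b (2 * H) hb)).div_const 2).congr_deriv ?_
  unfold fbmKernel
  ring

theorem continuous_fbmKernelPrimitive (hH : 0 < H) : Continuous (fbmKernelPrimitive H a b) := by
  have hq : (0 : ℝ) ≤ 2 * H := by positivity
  unfold fbmKernelPrimitive
  fun_prop (disch := exact fun _ => Or.inr hq)

theorem fbmKernel_nonpos_of_lt (hH0 : 0 ≤ H) (hH1 : H ≤ 1 / 2) (hab : a ≤ b) (hη : η < a) :
    fbmKernel H a b η ≤ 0 := by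
  have ha : 0 < a - η := by linarith
  have hb : 0 < b - η := by linarith
  rw [fbmKernel, Real.sign_of_pos ha, Real.sign_of_pos hb, abs_of_pos ha, abs_of_pos hb]
  have := Real.rpow_le_rpow_of_nonpos ha (by linarith : a - η ≤ b - η) (by linarith : 2 * H - 1 ≤ 0)
  nlinarith

theorem fbmKernel_nonneg_of_mem_Ioo (hH0 : 0 ≤ H) (hη : η ∈ Ioo a b) : 0 ≤ fbmKernel H a b η := by
  rw [fbmKernel, Real.sign_of_pos (sub_pos.2 hη.2), Real.sign_of_neg (sub_neg.2 hη.1)]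
  have := Real.rpow_nonneg (abs_nonneg (a - η)) (2 * H - 1)
  have := Real.rpow_nonneg (abs_nonneg (b - η)) (2 * H - 1)
  nlinarith

theorem fbmKernel_nonpos_of_gt (hH0 : 0 ≤ H) (hH1 : H ≤ 1 / 2) (hab : a ≤ b) (hη : b < η) :
    fbmKernel H a b η ≤ 0 := by
  have ha : a - η < 0 := by linarith
  have hb : b - η < 0 := by linarith
  rw [fbmKernel, Real.sign_of_neg ha, Real.sign_of_neg hb, abs_of_neg ha, abs_of_neg hb]
  have := Real.rpow_le_rpow_of_nonpos (by linarith : 0 < -(b - η)) (by linarith : -(b - η) ≤ -(a - η))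
    (by linarith : 2 * H - 1 ≤ 0)
  nlinarith

theorem intervalIntegrable_fbmKernel_and_integral_abs_eq {x y : ℝ} (hH0 : 0 < H) (hH1 : H ≤ 1 / 2)
    (hxa : x ≤ a) (hab : a < b) (hby : b ≤ y) :
    IntervalIntegrable (fbmKernel H a b) volume x y ∧
      ∫ η in x..y, |fbmKernel H a b η| = fbmKernelPrimitive H a b x
        - 2 * fbmKernelPrimitive H a b a + 2 * fbmKernelPrimitive H a b b
        - fbmKernelPrimitive H a b y := by
  have hP : ∀ s, ContinuousOn (fbmKernelPrimitive H a b) s :=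
    fun _ => (continuous_fbmKernelPrimitive hH0).continuousOn
  obtain ⟨hleft, eleft⟩ := integral_abs_eq_sub_of_hasDerivAt_of_nonpos hxa (hP _)
    (fun η hη => hasDerivAt_fbmKernelPrimitive hη.2.ne (by linarith [hη.2]))
    (fun η hη => fbmKernel_nonpos_of_lt hH0.le hH1 hab.le hη.2)
  obtain ⟨hmid, emid⟩ := integral_abs_eq_sub_of_hasDerivAt_of_nonneg hab.le (hP _)
    (fun η hη => hasDerivAt_fbmKernelPrimitive hη.1.ne' hη.2.ne)
    (fun η hη => fbmKernel_nonneg_of_mem_Ioo hH0.le hη)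
  obtain ⟨hright, eright⟩ := integral_abs_eq_sub_of_hasDerivAt_of_nonpos hby (hP _)
    (fun η hη => hasDerivAt_fbmKernelPrimitive (by linarith [hη.1]) hη.1.ne')
    (fun η hη => fbmKernel_nonpos_of_gt hH0.le hH1 hab.le hη.1)
  refine ⟨(hleft.trans hmid).trans hright, ?_⟩
  rw [← integral_add_adjacent_intervals (hleft.trans hmid).abs hright.abs,
    ← integral_add_adjacent_intervals hleft.abs hmid.abs, eleft, emid, eright]
  ring

theorem integral_abs_fbmKernel_le {x y : ℝ} (hH0 : 0 < H) (hH1 : H ≤ 1 / 2)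
    (hxa : x ≤ a) (hab : a < b) (hby : b ≤ y) :
    ∫ η in x..y, |fbmKernel H a b η| ≤ 2 * (b - a) ^ (2 * H) := by
  have hq : 0 < 2 * H := by positivity
  have hx : |a - x| ^ (2 * H) ≤ |b - x| ^ (2 * H) := by
    refine Real.rpow_le_rpow (abs_nonneg _) ?_ hq.le
    rw [abs_of_nonneg (by linarith), abs_of_nonneg (by linarith)]
    linarith
  have hy : |b - y| ^ (2 * H) ≤ |a - y| ^ (2 * H) := by
    refine Real.rpow_le_rpow (abs_nonneg _) ?_ hq.le
    rw [abs_of_nonpos (by linarith), abs_of_nonpos (by linarith)]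
    linarith
  rw [(intervalIntegrable_fbmKernel_and_integral_abs_eq hH0 hH1 hxa hab hby).2]
  simp only [fbmKernelPrimitive, sub_self, abs_zero, Real.zero_rpow hq.ne', abs_sub_comm a b,
    abs_of_pos (sub_pos.2 hab)]
  linarith

theorem intervalIntegrable_and_integral_abs_le_of_eq_fbmKernel {T : ℝ} {ρ : ℝ → ℝ}
    (hH0 : 0 < H) (hH1 : H ≤ 1 / 2) (ha : 0 ≤ a) (hab : a < b) (hbT : b ≤ T)
    (hρ : ∀ η : ℝ, 0 ≤ η → η ≠ a → η ≠ b → ρ η = fbmKernel H a b η) :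
    IntervalIntegrable ρ volume 0 T ∧ ∫ η in (0 : ℝ)..T, |ρ η| ≤ 2 * (b - a) ^ (2 * H) := by
  have hT : 0 ≤ T := by linarith
  have hae : ∀ᵐ η, η ∈ Ι 0 T → fbmKernel H a b η = ρ η := by
    filter_upwards [volume.ae_ne a, volume.ae_ne b] with η hηa hηb hη
    rw [uIoc_of_le hT] at hη
    exact (hρ η hη.1.le hηa hηb).symm
  refine ⟨(intervalIntegrable_fbmKernel_and_integral_abs_eq hH0 hH1 ha hab hbT).1.congr_ae
    ((ae_restrict_iff' measurableSet_uIoc).2 hae), ?_⟩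
  rw [← integral_congr_ae (hae.mono fun η h hη => congrArg abs (h hη))]
  exact integral_abs_fbmKernel_le hH0 hH1 ha hab hbT

end fbmKernel

theorem fbm_density_double_pairing_bound_general
    (H : ℝ) (hH0 : 0 < H) (hH1 : H ≤ 1 / 2)
    (T : ℝ) (hT : 0 < T)
    (φ : ℝ → ℝ → ℝ)
    (hφb : ∃ M : ℝ, ∀ η ∈ Set.Icc (0 : ℝ) T, ∀ ζ ∈ Set.Icc (0 : ℝ) T, |φ η ζ| ≤ M)
    (u v : ℝ) (hu : 0 ≤ u) (huv : u < v) (hv : v ≤ T)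
    (s t : ℝ) (hs : 0 ≤ s) (hst : s < t) (ht : t ≤ T)
    (ρuv ρst : ℝ → ℝ)
    (hρuv : ∀ η : ℝ, 0 ≤ η → η ≠ u → η ≠ v →
      ρuv η = H * (Real.sign (v - η) * |v - η| ^ (2 * H - 1)
        - Real.sign (u - η) * |u - η| ^ (2 * H - 1)))
    (hρst : ∀ ζ : ℝ, 0 ≤ ζ → ζ ≠ s → ζ ≠ t →
      ρst ζ = H * (Real.sign (t - ζ) * |t - ζ| ^ (2 * H - 1)
        - Real.sign (s - ζ) * |s - ζ| ^ (2 * H - 1))) :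
    |∫ ζ in (0 : ℝ)..T, ∫ η in (0 : ℝ)..T, φ η ζ * ρuv η * ρst ζ|
      ≤ 4 * (v - u) ^ (2 * H) * (t - s) ^ (2 * H) *
          sSup ((fun q : ℝ × ℝ => |φ q.1 q.2|) '' (Set.Icc (0 : ℝ) T ×ˢ Set.Icc (0 : ℝ) T)) := by
  set S := sSup ((fun q : ℝ × ℝ => |φ q.1 q.2|) '' (Icc (0 : ℝ) T ×ˢ Icc (0 : ℝ) T))
  obtain ⟨M, hM⟩ := hφb
  have hφS : ∀ η ∈ Icc (0 : ℝ) T, ∀ ζ ∈ Icc (0 : ℝ) T, |φ η ζ| ≤ S := fun η hη ζ hζ =>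
    le_csSup ⟨M, by rintro _ ⟨q, ⟨hq₁, hq₂⟩, rfl⟩; exact hM q.1 hq₁ q.2 hq₂⟩ ⟨(η, ζ), ⟨hη, hζ⟩, rfl⟩
  have hS : 0 ≤ S := (abs_nonneg _).trans (hφS 0 ⟨le_rfl, hT.le⟩ 0 ⟨le_rfl, hT.le⟩)
  obtain ⟨huvI, huv_le⟩ :=
    intervalIntegrable_and_integral_abs_le_of_eq_fbmKernel hH0 hH1 hu huv hv hρuv
  obtain ⟨hstI, hst_le⟩ :=
    intervalIntegrable_and_integral_abs_le_of_eq_fbmKernel hH0 hH1 hs hst ht hρst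
  calc _ ≤ S * (∫ η in (0 : ℝ)..T, |ρuv η|) * ∫ ζ in (0 : ℝ)..T, |ρst ζ| :=
        abs_integral_integral_mul_le hT.le hφS huvI hstI
    _ ≤ S * (2 * (v - u) ^ (2 * H)) * (2 * (t - s) ^ (2 * H)) := by
        have : 0 ≤ ∫ ζ in (0 : ℝ)..T, |ρst ζ| :=
          intervalIntegral.integral_nonneg hT.le fun ζ _ => abs_nonneg _
        gcongr
    _ = _ := by ring

/-- For `H ∈ (0,1/2]`, `T > 0`, a bounded measurable `φ : [0,T]² → ℝ`, `0 ≤ u < v ≤ T` and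
`0 ≤ s < t ≤ T`,
`|∫_0^T ∫_0^T φ(η,ζ) ρ_{uv}(η) ρ_{st}(ζ) dη dζ|
  ≤ 4 (v − u)^{2H} (t − s)^{2H} sup_{(η,ζ) ∈ [0,T]²} |φ(η,ζ)|`,
where `ρ_{ab}(η) = H (sgn(b − η)|b − η|^{2H−1} − sgn(a − η)|a − η|^{2H−1})` (set to `0` at
`η ∈ {a, b}`). -/
theorem fbm_density_double_pairing_bound
    (H : ℝ) (hH0 : 0 < H) (hH1 : H ≤ 1 / 2)
    (T : ℝ) (hT : 0 < T)
    (φ : ℝ → ℝ → ℝ) (hφm : Measurable fun q : ℝ × ℝ => φ q.1 q.2)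
    (hφb : ∃ M : ℝ, ∀ η ∈ Set.Icc (0 : ℝ) T, ∀ ζ ∈ Set.Icc (0 : ℝ) T, |φ η ζ| ≤ M)
    (u v : ℝ) (hu : 0 ≤ u) (huv : u < v) (hv : v ≤ T)
    (s t : ℝ) (hs : 0 ≤ s) (hst : s < t) (ht : t ≤ T)
    (ρuv ρst : ℝ → ℝ)
    (hρuv : ∀ η : ℝ, 0 ≤ η → η ≠ u → η ≠ v →
      ρuv η = H * (Real.sign (v - η) * |v - η| ^ (2 * H - 1)
        - Real.sign (u - η) * |u - η| ^ (2 * H - 1)))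
    (hρuvu : ρuv u = 0) (hρuvv : ρuv v = 0)
    (hρst : ∀ ζ : ℝ, 0 ≤ ζ → ζ ≠ s → ζ ≠ t →
      ρst ζ = H * (Real.sign (t - ζ) * |t - ζ| ^ (2 * H - 1)
        - Real.sign (s - ζ) * |s - ζ| ^ (2 * H - 1)))
    (hρsts : ρst s = 0) (hρstt : ρst t = 0) :
    |∫ ζ in (0 : ℝ)..T, ∫ η in (0 : ℝ)..T, φ η ζ * ρuv η * ρst ζ|
      ≤ 4 * (v - u) ^ (2 * H) * (t - s) ^ (2 * H) *
          sSup ((fun q : ℝ × ℝ => |φ q.1 q.2|) '' (Set.Icc (0 : ℝ) T ×ˢ Set.Icc (0 : ℝ) T)) :=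
  fbm_density_double_pairing_bound_general H hH0 hH1 T hT φ hφb u v hu huv hv s t hs hst ht ρuv ρst
    hρuv hρst
end
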